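/- Let k, l ≥ 1 with k ≠ l, m = 2k+1, n = 2l+1, and 1 ≤ r ≤ mn. Call a board B with r blockers reduced if its counts λ_t = λ_t(B) and δ_t = δ_t(B) satisfy: (i) λ1 ≥ λ2, λ1 ≥ λ3, λ1 ≥ λ4; (ii) if λ1 = λ3 then λ2 ≥ λ4, and if in addition λ2 = λ4 then δ1 ≥ δ3, and if further δ1 = δ3 then δ2 ≥ δ4; (iii) if λ1 = λ2 then λ3 ≥ λ4, and if in addition λ3 = λ4 then δ2 ≥ δ4; (iv) if λ1 = λ4 then λ2 ≥ λ3, and if in addition λ2 = λ3 then δ1 ≥ δ3. Then: (a) every board with r blockers on the m×n grid is equivalent under {R0, H, V, R180} to some reduced board; and (b) if two reduced boards are equivalent under {R0, H, V, R180} then they have the same board partition (equal values of all λ_t, all δ_t, and the center indicator). -/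
import Mathlib


/-- The symmetry group `{R0, H, V, R180}` of a non-square `m × n` rectangle,
as permutations of `Fin m × Fin n` (`Fin.rev i = m-1-i` resp. `n-1-j`). -/
def RectG (m n : ℕ) : Set ((Fin m × Fin n) → (Fin m × Fin n)) :=
  { fun p => p,                    -- R0
    fun p => (p.1.rev, p.2),       -- H
    fun p => (p.1, p.2.rev),       -- V
    fun p => (p.1.rev, p.2.rev) }  -- R180

/-- Blockers in the top-left corner `Q1`. -/
def lam1 (k l : ℕ) (B : Finset (Fin (2*k+1) × Fin (2*l+1))) : ℕ :=
  (B.filter (fun p => p.1.val < k ∧ p.2.val < l)).card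

/-- Blockers in the top-right corner `Q2`. -/
def lam2 (k l : ℕ) (B : Finset (Fin (2*k+1) × Fin (2*l+1))) : ℕ :=
  (B.filter (fun p => p.1.val < k ∧ l < p.2.val)).card

/-- Blockers in the bottom-right corner `Q3`. -/
def lam3 (k l : ℕ) (B : Finset (Fin (2*k+1) × Fin (2*l+1))) : ℕ :=
  (B.filter (fun p => k < p.1.val ∧ l < p.2.val)).card

/-- Blockers in the bottom-left corner `Q4`. -/
def lam4 (k l : ℕ) (B : Finset (Fin (2*k+1) × Fin (2*l+1))) : ℕ :=
  (B.filter (fun p => k < p.1.val ∧ p.2.val < l)).card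

/-- Blockers in the top strip `S1`. -/
def del1 (k l : ℕ) (B : Finset (Fin (2*k+1) × Fin (2*l+1))) : ℕ :=
  (B.filter (fun p => p.1.val < k ∧ p.2.val = l)).card

/-- Blockers in the right strip `S2`. -/
def del2 (k l : ℕ) (B : Finset (Fin (2*k+1) × Fin (2*l+1))) : ℕ :=
  (B.filter (fun p => p.1.val = k ∧ l < p.2.val)).card

/-- Blockers in the bottom strip `S3`. -/
def del3 (k l : ℕ) (B : Finset (Fin (2*k+1) × Fin (2*l+1))) : ℕ :=
  (B.filter (fun p => k < p.1.val ∧ p.2.val = l)).card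

/-- Blockers in the left strip `S4`. -/
def del4 (k l : ℕ) (B : Finset (Fin (2*k+1) × Fin (2*l+1))) : ℕ :=
  (B.filter (fun p => p.1.val = k ∧ p.2.val < l)).card

/-- Center indicator: `1` if the center cell `(k,l)` is blocked, `0` otherwise. -/
def cen (k l : ℕ) (B : Finset (Fin (2*k+1) × Fin (2*l+1))) : ℕ :=
  (B.filter (fun p => p.1.val = k ∧ p.2.val = l)).card

/-- Conditions (i)–(iv) on the board partition
`(λ1,λ2,λ3,λ4; δ1,δ2,δ3,δ4; c)` of a `(2k+1) × (2l+1)` board. -/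
def ReducedRO (k l : ℕ) (B : Finset (Fin (2*k+1) × Fin (2*l+1))) : Prop :=
  -- (i)
  lam1 k l B ≥ lam2 k l B ∧ lam1 k l B ≥ lam3 k l B ∧ lam1 k l B ≥ lam4 k l B ∧
  -- (ii)
  (lam1 k l B = lam3 k l B →
    lam2 k l B ≥ lam4 k l B ∧
    (lam2 k l B = lam4 k l B →
      del1 k l B ≥ del3 k l B ∧
      (del1 k l B = del3 k l B → del2 k l B ≥ del4 k l B))) ∧
  -- (iii)
  (lam1 k l B = lam2 k l B →
    lam3 k l B ≥ lam4 k l B ∧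
    (lam3 k l B = lam4 k l B → del2 k l B ≥ del4 k l B)) ∧
  -- (iv)
  (lam1 k l B = lam4 k l B →
    lam2 k l B ≥ lam3 k l B ∧
    (lam2 k l B = lam3 k l B → del1 k l B ≥ del3 k l B))

section Aux

variable {k l : ℕ}

private lemma filt_card {m n : ℕ} (g : Fin m × Fin n → Fin m × Fin n)
    (hg : Function.Injective g) (B : Finset (Fin m × Fin n))
    (p q : Fin m × Fin n → Prop) [DecidablePred p] [DecidablePred q]
    (h : ∀ x, p (g x) ↔ q x) :
    ((B.image g).filter p).card = (B.filter q).card := by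
  rw [Finset.filter_image, Finset.card_image_of_injective _ hg]
  congr 1
  exact Finset.filter_congr (fun x _ => by simp [h x])

private lemma injH {m n : ℕ} :
    Function.Injective (fun p : Fin m × Fin n => (p.1.rev, p.2)) := by
  intro p q h
  simp only [Prod.ext_iff, Fin.rev_inj] at h
  exact Prod.ext h.1 h.2

private lemma injV {m n : ℕ} :
    Function.Injective (fun p : Fin m × Fin n => (p.1, p.2.rev)) := by
  intro p q h
  simp only [Prod.ext_iff, Fin.rev_inj] at h
  exact Prod.ext h.1 h.2

private lemma injR {m n : ℕ} :
    Function.Injective (fun p : Fin m × Fin n => (p.1.rev, p.2.rev)) := by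
  intro p q h
  simp only [Prod.ext_iff, Fin.rev_inj] at h
  exact Prod.ext h.1 h.2

private lemma Hcounts (B : Finset (Fin (2*k+1) × Fin (2*l+1))) :
    lam1 k l (B.image (fun p => (p.1.rev, p.2))) = lam4 k l B ∧
    lam2 k l (B.image (fun p => (p.1.rev, p.2))) = lam3 k l B ∧
    lam3 k l (B.image (fun p => (p.1.rev, p.2))) = lam2 k l B ∧
    lam4 k l (B.image (fun p => (p.1.rev, p.2))) = lam1 k l B ∧
    del1 k l (B.image (fun p => (p.1.rev, p.2))) = del3 k l B ∧
    del2 k l (B.image (fun p => (p.1.rev, p.2))) = del2 k l B ∧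
    del3 k l (B.image (fun p => (p.1.rev, p.2))) = del1 k l B ∧
    del4 k l (B.image (fun p => (p.1.rev, p.2))) = del4 k l B ∧
    cen k l (B.image (fun p => (p.1.rev, p.2))) = cen k l B := by
  unfold lam1 lam2 lam3 lam4 del1 del2 del3 del4 cen
  refine ⟨?_, ?_, ?_, ?_, ?_, ?_, ?_, ?_, ?_⟩ <;>
    exact filt_card _ injH B _ _
      (by rintro ⟨i, j⟩; have hi := i.isLt; have hj := j.isLt
          simp only [Fin.val_rev]; constructor <;> (rintro ⟨h1, h2⟩; omega))

private lemma Vcounts (B : Finset (Fin (2*k+1) × Fin (2*l+1))) :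
    lam1 k l (B.image (fun p => (p.1, p.2.rev))) = lam2 k l B ∧
    lam2 k l (B.image (fun p => (p.1, p.2.rev))) = lam1 k l B ∧
    lam3 k l (B.image (fun p => (p.1, p.2.rev))) = lam4 k l B ∧
    lam4 k l (B.image (fun p => (p.1, p.2.rev))) = lam3 k l B ∧
    del1 k l (B.image (fun p => (p.1, p.2.rev))) = del1 k l B ∧
    del2 k l (B.image (fun p => (p.1, p.2.rev))) = del4 k l B ∧
    del3 k l (B.image (fun p => (p.1, p.2.rev))) = del3 k l B ∧
    del4 k l (B.image (fun p => (p.1, p.2.rev))) = del2 k l B ∧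
    cen k l (B.image (fun p => (p.1, p.2.rev))) = cen k l B := by
  unfold lam1 lam2 lam3 lam4 del1 del2 del3 del4 cen
  refine ⟨?_, ?_, ?_, ?_, ?_, ?_, ?_, ?_, ?_⟩ <;>
    exact filt_card _ injV B _ _
      (by rintro ⟨i, j⟩; have hi := i.isLt; have hj := j.isLt
          simp only [Fin.val_rev]; constructor <;> (rintro ⟨h1, h2⟩; omega))

private lemma Rcounts (B : Finset (Fin (2*k+1) × Fin (2*l+1))) :
    lam1 k l (B.image (fun p => (p.1.rev, p.2.rev))) = lam3 k l B ∧
    lam2 k l (B.image (fun p => (p.1.rev, p.2.rev))) = lam4 k l B ∧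
    lam3 k l (B.image (fun p => (p.1.rev, p.2.rev))) = lam1 k l B ∧
    lam4 k l (B.image (fun p => (p.1.rev, p.2.rev))) = lam2 k l B ∧
    del1 k l (B.image (fun p => (p.1.rev, p.2.rev))) = del3 k l B ∧
    del2 k l (B.image (fun p => (p.1.rev, p.2.rev))) = del4 k l B ∧
    del3 k l (B.image (fun p => (p.1.rev, p.2.rev))) = del1 k l B ∧
    del4 k l (B.image (fun p => (p.1.rev, p.2.rev))) = del2 k l B ∧
    cen k l (B.image (fun p => (p.1.rev, p.2.rev))) = cen k l B := by
  unfold lam1 lam2 lam3 lam4 del1 del2 del3 del4 cen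
  refine ⟨?_, ?_, ?_, ?_, ?_, ?_, ?_, ?_, ?_⟩ <;>
    exact filt_card _ injR B _ _
      (by rintro ⟨i, j⟩; have hi := i.isLt; have hj := j.isLt
          simp only [Fin.val_rev]; constructor <;> (rintro ⟨h1, h2⟩; omega))

/-- The abstract reducedness condition on a partition tuple. -/
private def RedT (a b c d p q s t : ℕ) : Prop :=
  a ≥ b ∧ a ≥ c ∧ a ≥ d ∧
  (a = c → b ≥ d ∧ (b = d → p ≥ s ∧ (p = s → q ≥ t))) ∧
  (a = b → c ≥ d ∧ (c = d → q ≥ t)) ∧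
  (a = d → b ≥ c ∧ (b = c → p ≥ s))

private lemma red_iff (B : Finset (Fin (2*k+1) × Fin (2*l+1))) :
    ReducedRO k l B ↔ RedT (lam1 k l B) (lam2 k l B) (lam3 k l B) (lam4 k l B)
      (del1 k l B) (del2 k l B) (del3 k l B) (del4 k l B) := Iff.rfl

private lemma keyT (a b c d p q s t : ℕ) :
    RedT a b c d p q s t ∨ RedT d c b a s q p t ∨
    RedT b a d c p t s q ∨ RedT c d a b s t p q := by
  unfold RedT
  omega

end Aux

set_option maxHeartbeats 1000000 in
/-- (a) every board with `r` blockers on the (non-square)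
`(2k+1) × (2l+1)` grid is equivalent under `{R0, H, V, R180}` to a reduced
board; (b) two equivalent reduced boards have the same board partition. -/
theorem stmt_7 (k l r : ℕ) (hk : 1 ≤ k) (hl : 1 ≤ l) (hkl : k ≠ l)
    (hr1 : 1 ≤ r) (hr2 : r ≤ (2*k+1) * (2*l+1)) :
    (∀ B : Finset (Fin (2*k+1) × Fin (2*l+1)), B.card = r →
      ∃ B' : Finset (Fin (2*k+1) × Fin (2*l+1)), B'.card = r ∧ ReducedRO k l B' ∧
        ∃ g ∈ RectG (2*k+1) (2*l+1), B.image g = B') ∧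
    (∀ B B' : Finset (Fin (2*k+1) × Fin (2*l+1)), B.card = r → B'.card = r →
      ReducedRO k l B → ReducedRO k l B' →
      (∃ g ∈ RectG (2*k+1) (2*l+1), B.image g = B') →
      lam1 k l B = lam1 k l B' ∧ lam2 k l B = lam2 k l B' ∧
      lam3 k l B = lam3 k l B' ∧ lam4 k l B = lam4 k l B' ∧
      del1 k l B = del1 k l B' ∧ del2 k l B = del2 k l B' ∧
      del3 k l B = del3 k l B' ∧ del4 k l B = del4 k l B' ∧
      cen k l B = cen k l B') := by
  constructor
  · -- (a) existence of a reduced representative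
    intro B hB
    rcases keyT (lam1 k l B) (lam2 k l B) (lam3 k l B) (lam4 k l B)
      (del1 k l B) (del2 k l B) (del3 k l B) (del4 k l B) with h | h | h | h
    · refine ⟨B, hB, (red_iff B).mpr h, fun p => p, ?_, ?_⟩
      · left; rfl
      · simp
    · refine ⟨B.image (fun p => (p.1.rev, p.2)), ?_, ?_, fun p => (p.1.rev, p.2), ?_, rfl⟩
      · rw [Finset.card_image_of_injective _ injH]; exact hB
      · rw [red_iff]
        obtain ⟨h1, h2, h3, h4, h5, h6, h7, h8, _⟩ := Hcounts B
        rw [h1, h2, h3, h4, h5, h6, h7, h8]; exact h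
      · right; left; rfl
    · refine ⟨B.image (fun p => (p.1, p.2.rev)), ?_, ?_, fun p => (p.1, p.2.rev), ?_, rfl⟩
      · rw [Finset.card_image_of_injective _ injV]; exact hB
      · rw [red_iff]
        obtain ⟨h1, h2, h3, h4, h5, h6, h7, h8, _⟩ := Vcounts B
        rw [h1, h2, h3, h4, h5, h6, h7, h8]; exact h
      · right; right; left; rfl
    · refine ⟨B.image (fun p => (p.1.rev, p.2.rev)), ?_, ?_,
        fun p => (p.1.rev, p.2.rev), ?_, rfl⟩
      · rw [Finset.card_image_of_injective _ injR]; exact hB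
      · rw [red_iff]
        obtain ⟨h1, h2, h3, h4, h5, h6, h7, h8, _⟩ := Rcounts B
        rw [h1, h2, h3, h4, h5, h6, h7, h8]; exact h
      · right; right; right; rfl
  · -- (b) uniqueness of the board partition
    rintro B B' hB hB' hred hred' ⟨g, hg, rfl⟩
    simp only [RectG, Set.mem_insert_iff, Set.mem_singleton_iff] at hg
    rw [red_iff] at hred hred'
    rcases hg with rfl | rfl | rfl | rfl
    · have : B.image (fun p => p) = B := Finset.image_id'
      rw [this]
      exact ⟨rfl, rfl, rfl, rfl, rfl, rfl, rfl, rfl, rfl⟩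
    · obtain ⟨h1, h2, h3, h4, h5, h6, h7, h8, h9⟩ := Hcounts B
      rw [h1, h2, h3, h4, h5, h6, h7, h8] at hred' ⊢
      rw [h9]
      unfold RedT at hred hred'
      refine ⟨?_, ?_, ?_, ?_, ?_, ?_, ?_, ?_, rfl⟩ <;> omega
    · obtain ⟨h1, h2, h3, h4, h5, h6, h7, h8, h9⟩ := Vcounts B
      rw [h1, h2, h3, h4, h5, h6, h7, h8] at hred' ⊢
      rw [h9]
      unfold RedT at hred hred'
      refine ⟨?_, ?_, ?_, ?_, ?_, ?_, ?_, ?_, rfl⟩ <;> omega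
    · obtain ⟨h1, h2, h3, h4, h5, h6, h7, h8, h9⟩ := Rcounts B
      rw [h1, h2, h3, h4, h5, h6, h7, h8] at hred' ⊢
      rw [h9]
      unfold RedT at hred hred'
      refine ⟨?_, ?_, ?_, ?_, ?_, ?_, ?_, ?_, rfl⟩ <;> omega
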